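/- arXiv:2006.15393 — 2 statements merged into one kernel-verified Lean document; each statement's English description precedes it below -/
import Mathlib

section
/- Let K be the closed unit disk in ℝ² and define, in polar coordinates, f(r,θ) = (r/2, θ) and g(r,θ) = (r, 2θ mod 2π). The action of the discrete semigroup S generated by f and g on K, given by f^n g^m(r,θ) = (r/2^n, 2^m θ mod 2π), is not super asymptotically nonexpansive: for x = (1,0) and t = f, no left ideal of S supported by f witnesses the super asymptotic nonexpansiveness condition at x. -/
open Metric Real

/-- `f(r,θ) = (r/2, θ)` in polar coordinates, i.e. scaling by `1/2`. -/
noncomputable def fmap : EuclideanSpace ℝ (Fin 2) → EuclideanSpace ℝ (Fin 2) :=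
  fun p => (1 / 2 : ℝ) • p

open Classical in
/-- `g(r,θ) = (r, 2θ mod 2π)` in polar coordinates; in Cartesian coordinates this is the
angle-doubling map `p ↦ ‖p‖⁻¹ • (p₀² − p₁², 2 p₀ p₁)` (and `g(0) = 0`). -/
noncomputable def gmap : EuclideanSpace ℝ (Fin 2) → EuclideanSpace ℝ (Fin 2) :=
  fun p => if p = 0 then 0 else WithLp.toLp 2 (‖p‖⁻¹ • ![(p 0) ^ 2 - (p 1) ^ 2, 2 * (p 0) * (p 1)])

/-- The discrete semigroup `S = {f^n g^m : (n,m) ∈ ℕ₀² \ {(0,0)}}`, written additively on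
the exponents. -/
def Spair : Type := {p : ℕ × ℕ // p ≠ (0, 0)}

instance : Add Spair :=
  ⟨fun a b => ⟨a.1 + b.1, fun h => a.2 (by
    have h1 : a.1.1 + b.1.1 = 0 := congrArg Prod.fst h
    have h2 : a.1.2 + b.1.2 = 0 := congrArg Prod.snd h
    exact Prod.ext (by omega) (by omega))⟩⟩

/-- The action of `S` on `ℝ²`: `f^n g^m`. -/
noncomputable def actS : Spair → EuclideanSpace ℝ (Fin 2) → EuclideanSpace ℝ (Fin 2) :=
  fun s => fmap^[s.1.1] ∘ gmap^[s.1.2]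

/-- The point `x = (1, 0)`, i.e. `(r,θ) = (1,0)` in polar coordinates. -/
noncomputable def x₀ : EuclideanSpace ℝ (Fin 2) := WithLp.toLp 2 ![1, 0]

/-!
In polar coordinates `f^n g^m (r, θ) = (r / 2^n, 2^m θ)`. A left ideal containing `f^n g^m₀`
contains `f^n g^M` for every `M > m₀`. The point `y` of the unit circle at angle `π / 2^M` lies
within arc length `π / 2^M` of `x = (1, 0)`, yet `f^n g^M` sends `x` and `y` to antipodal points
of the circle of radius `2^(-n)`; for `M > n` their distance `2^(1-n)` exceeds `‖x − y‖`.
-/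

open Complex in
noncomputable def polar (r θ : ℝ) : EuclideanSpace ℝ (Fin 2) :=
  orthonormalBasisOneI.repr (r * exp (θ * I))

lemma polar_apply_zero (r θ : ℝ) : polar r θ 0 = r * cos θ := by
  simp [polar, Complex.orthonormalBasisOneI_repr_apply, Complex.exp_ofReal_mul_I_re]

lemma polar_apply_one (r θ : ℝ) : polar r θ 1 = r * sin θ := by
  simp [polar, Complex.orthonormalBasisOneI_repr_apply, Complex.exp_ofReal_mul_I_im]

lemma norm_polar (r θ : ℝ) : ‖polar r θ‖ = |r| := by
  simp [polar]

lemma smul_polar (c r θ : ℝ) : c • polar r θ = polar (c * r) θ := by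
  simp [polar, ← map_smul, mul_assoc]

lemma gmap_polar {r : ℝ} (hr : 0 ≤ r) (θ : ℝ) : gmap (polar r θ) = polar r (2 * θ) := by
  rcases hr.eq_or_lt with rfl | hr
  · simp [gmap, polar]
  have hne : polar r θ ≠ 0 := by
    rw [← norm_pos_iff, norm_polar, abs_of_pos hr]; exact hr
  rw [gmap, if_neg hne, norm_polar, abs_of_pos hr]
  ext i
  fin_cases i
  · simp [polar_apply_zero, polar_apply_one, cos_two_mul', field]
  · simp [polar_apply_zero, polar_apply_one, sin_two_mul, field]

lemma gmap_iterate_polar {r : ℝ} (hr : 0 ≤ r) (m : ℕ) (θ : ℝ) :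
    gmap^[m] (polar r θ) = polar r (2 ^ m * θ) := by
  have : Function.Semiconj (polar r) (2 * ·) gmap := fun θ => (gmap_polar hr θ).symm
  rw [← this.iterate_right m, mul_left_iterate_apply]

lemma fmap_iterate_polar (n : ℕ) (r θ : ℝ) : fmap^[n] (polar r θ) = polar (r / 2 ^ n) θ := by
  change ((1 / 2 : ℝ) • ·)^[n] (polar r θ) = _
  rw [smul_iterate_apply, smul_polar, one_div_pow, one_div_mul_eq_div]

lemma actS_polar (s : Spair) {r : ℝ} (hr : 0 ≤ r) (θ : ℝ) :
    actS s (polar r θ) = polar (r / 2 ^ s.1.1) (2 ^ s.1.2 * θ) := by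
  simp only [actS, Function.comp_apply, gmap_iterate_polar hr, fmap_iterate_polar]

lemma x₀_eq_polar : x₀ = polar 1 0 := by
  ext i; fin_cases i <;> simp [x₀, polar_apply_zero, polar_apply_one]

lemma norm_polar_sub_polar (r θ r' θ' : ℝ) :
    ‖polar r θ - polar r' θ'‖ =
      ‖r * Complex.exp (θ * Complex.I) - r' * Complex.exp (θ' * Complex.I)‖ := by
  rw [polar, polar, ← map_sub, LinearIsometryEquiv.norm_map]

lemma norm_polar_one_zero_sub_polar_one_le (θ : ℝ) : ‖polar 1 0 - polar 1 θ‖ ≤ |θ| := by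
  rw [norm_polar_sub_polar, norm_sub_rev, ← Real.norm_eq_abs]
  simpa [mul_comm] using Real.norm_exp_I_mul_ofReal_sub_one_le (x := θ)

lemma norm_polar_zero_sub_polar_pi (r : ℝ) : ‖polar r 0 - polar r π‖ = 2 * |r| := by
  rw [norm_polar_sub_polar]
  simp [Complex.exp_pi_mul_I, ← two_mul]

lemma Spair.exists_mem_of_lt {I : Set Spair} (hI : ∀ s : Spair, ∀ i ∈ I, s + i ∈ I) {i : Spair}
    (hi : i ∈ I) {m : ℕ} (hm : i.1.2 < m) : ∃ s ∈ I, s.1 = (i.1.1, m) := by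
  refine ⟨⟨(0, m - i.1.2), by simp; omega⟩ + i, hI _ _ hi, ?_⟩
  change (0 + i.1.1, m - i.1.2 + i.1.2) = _
  rw [zero_add, Nat.sub_add_cancel hm.le]

/-- the action of `S` on the closed unit disk `K` is not super asymptotically
nonexpansive at `x = (1,0)`, `t = f`: there is no left ideal `I` of `S` supported by `t`
such that `‖s.x − s.y‖ ≤ ‖x − y‖` for all `s ∈ I` and all `y ∈ K`. -/
theorem action_not_superAsympNonexpansive :
    ¬ ∃ I : Set Spair,
      (I.Nonempty ∧ ∀ s : Spair, ∀ i ∈ I, s + i ∈ I) ∧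
      (∀ i ∈ I, ∃ s : Spair, i = s + ⟨(1, 0), by simp⟩) ∧
      (∀ s ∈ I, ∀ y ∈ closedBall (0 : EuclideanSpace ℝ (Fin 2)) 1,
        ‖actS s x₀ - actS s y‖ ≤ ‖x₀ - y‖) := by
  rintro ⟨I, ⟨⟨i, hi⟩, hI⟩, -, hK⟩
  set n := i.1.1
  set M := n + i.1.2 + 1
  obtain ⟨s, hs, hs_eq⟩ := Spair.exists_mem_of_lt hI hi (m := M) (by omega)
  have hθ : (2 : ℝ) ^ M * (π / 2 ^ M) = π := mul_div_cancel₀ _ (by positivity)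
  have h_nonexp := hK s hs (polar 1 (π / 2 ^ M)) (by simp [norm_polar])
  rw [x₀_eq_polar, actS_polar s zero_le_one, actS_polar s zero_le_one, hs_eq, mul_zero, hθ,
    norm_polar_zero_sub_polar_pi] at h_nonexp
  have h_far : 2 * |1 / (2 : ℝ) ^ n| ≤ |π / 2 ^ M| := h_nonexp.trans (norm_polar_one_zero_sub_polar_one_le _)
  have h_close : π / 2 ^ M < 2 * (1 / 2 ^ n) := by
    have hM : (2 : ℝ) ^ M = 2 ^ n * 2 ^ i.1.2 * 2 := by simp only [M, pow_succ, pow_add]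
    rw [hM, mul_one_div, div_lt_div_iff₀ (by positivity) (by positivity)]
    nlinarith [pi_lt_four, one_le_pow₀ (M₀ := ℝ) one_le_two (n := i.1.2), pow_pos two_pos (M₀ := ℝ) n]
  rw [abs_of_pos (by positivity), abs_of_pos (by positivity)] at h_far
  exact h_far.not_gt h_close
end

section
/- Let S be a countably compact right reversible semitopological semigroup acting separately weakly continuously on a norm-separable subset K of a Banach space. If the action is asymptotically nonexpansive, then it is pointwise eventually nonexpansive. -/
/-- A (nonempty) left ideal of a semigroup `S`: `I ≠ ∅` and `S * I ⊆ I`. -/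
def IsLeftIdeal {S : Type*} [Semigroup S] (I : Set S) : Prop :=
  I.Nonempty ∧ ∀ s : S, ∀ i ∈ I, s * i ∈ I

/-- `S` is right reversible: any two closed left ideals of `S` intersect. -/
def RightReversible (S : Type*) [Semigroup S] [TopologicalSpace S] : Prop :=
  ∀ I J : Set S, IsLeftIdeal I → IsLeftIdeal J → IsClosed I → IsClosed J → (I ∩ J).Nonempty

/-- Asymptotically nonexpansive action. -/
def AsympNonexpansive {S E : Type*} [Semigroup S] [NormedAddCommGroup E]
    (act : S → E → E) (K : Set E) : Prop :=
  ∀ x ∈ K, ∀ y ∈ K, ∃ I : Set S, IsLeftIdeal I ∧ ∀ s ∈ I, ‖act s x - act s y‖ ≤ ‖x - y‖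

/-- Pointwise eventually nonexpansive action. -/
def PointwiseEventuallyNonexpansive {S E : Type*} [Semigroup S] [NormedAddCommGroup E]
    (act : S → E → E) (K : Set E) : Prop :=
  ∀ x ∈ K, ∃ I : Set S, IsLeftIdeal I ∧ ∀ s ∈ I, ∀ y ∈ K, ‖act s x - act s y‖ ≤ ‖x - y‖

/-!
Fix `x ∈ K` and a countable dense set `{y₀, y₁, …} ⊆ K`. Asymptotic nonexpansiveness gives left
ideals `Iₙ` on which `‖s.x - s.yₙ‖ ≤ ‖x - yₙ‖`. Closed balls are weakly closed and `s ↦ s.x` is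
weakly continuous, so the bound survives on the closed left ideals `closure Iₙ`. Right
reversibility makes their finite intersections nonempty and countable compactness then makes
`⋂ₙ closure Iₙ` a left ideal. For `s` in it the bound holds at every `yₙ`, hence on all of `K`,
because `y ↦ s.y` is weakly continuous and the norm is weakly lower semicontinuous.
-/

open Set Filter Topology Metric

section LeftIdeal

variable {S : Type*} [Semigroup S]

lemma isLeftIdeal_univ [Nonempty S] : IsLeftIdeal (univ : Set S) :=
  ⟨univ_nonempty, fun _ _ _ => trivial⟩

lemma IsLeftIdeal.inter {I J : Set S} (hI : IsLeftIdeal I) (hJ : IsLeftIdeal J)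
    (hIJ : (I ∩ J).Nonempty) : IsLeftIdeal (I ∩ J) :=
  ⟨hIJ, fun s _ hi => ⟨hI.2 s _ hi.1, hJ.2 s _ hi.2⟩⟩

lemma isLeftIdeal_iInter {ι : Sort*} {J : ι → Set S} (hJ : ∀ i, IsLeftIdeal (J i))
    (hne : (⋂ i, J i).Nonempty) : IsLeftIdeal (⋂ i, J i) :=
  ⟨hne, fun s _ hi => mem_iInter.2 fun i => (hJ i).2 s _ (mem_iInter.1 hi i)⟩

variable [TopologicalSpace S]

lemma IsLeftIdeal.closure (hmulL : ∀ t : S, Continuous fun s => t * s) {I : Set S}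
    (hI : IsLeftIdeal I) : IsLeftIdeal (closure I) :=
  ⟨hI.1.closure, fun s _ hi => map_mem_closure (hmulL s) hi fun j hj => hI.2 s j hj⟩

lemma RightReversible.isLeftIdeal_biInter_finset [Nonempty S] (hrev : RightReversible S)
    {ι : Type*} {J : ι → Set S} (hJ : ∀ i, IsLeftIdeal (J i)) (hJc : ∀ i, IsClosed (J i))
    (t : Finset ι) : IsLeftIdeal (⋂ i ∈ t, J i) := by
  classical
  induction t using Finset.induction_on with
  | empty => simpa using isLeftIdeal_univ
  | insert a t _ ih =>
    rw [Finset.set_biInter_insert]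
    exact (hJ a).inter ih <| hrev _ _ (hJ a) ih (hJc a) (isClosed_biInter fun i _ => hJc i)

lemma RightReversible.isLeftIdeal_iInter_of_countablyCompact (hrev : RightReversible S)
    (hcc : ∀ F : ℕ → Set S, (∀ n, IsClosed (F n)) →
      (∀ t : Finset ℕ, (⋂ n ∈ t, F n).Nonempty) → (⋂ n, F n).Nonempty)
    {J : ℕ → Set S} (hJ : ∀ n, IsLeftIdeal (J n)) (hJc : ∀ n, IsClosed (J n)) :
    IsLeftIdeal (⋂ n, J n) :=
  have : Nonempty S := (hJ 0).1.to_subtype.map Subtype.val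
  isLeftIdeal_iInter hJ <| hcc J hJc fun t => (hrev.isLeftIdeal_biInter_finset hJ hJc t).1

end LeftIdeal

section WeakTopology

variable {E : Type*} [NormedAddCommGroup E] [NormedSpace ℝ E]

lemma isClosed_toWeakSpace_closedBall (r : ℝ) :
    IsClosed (toWeakSpace ℝ E '' closedBall 0 r) := by
  rw [← isClosed_closedBall.closure_eq, (convex_closedBall 0 r).toWeakSpace_closure ℝ]
  exact isClosed_closure

lemma norm_le_of_tendsto_toWeakSpace {α : Type*} {l : Filter α} [l.NeBot] {u : α → E} {v : E}
    {r : α → ℝ} {R : ℝ} (hu : Tendsto (fun a => toWeakSpace ℝ E (u a)) l (𝓝 (toWeakSpace ℝ E v)))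
    (hr : Tendsto r l (𝓝 R)) (hle : ∀ᶠ a in l, ‖u a‖ ≤ r a) : ‖v‖ ≤ R := by
  refine le_of_forall_pos_le_add fun ε hε => ?_
  have hball : ∀ᶠ a in l, toWeakSpace ℝ E (u a) ∈ toWeakSpace ℝ E '' closedBall 0 (R + ε) := by
    filter_upwards [hle, hr.eventually (gt_mem_nhds (lt_add_of_pos_right R hε))] with a h1 h2
    exact ⟨u a, mem_closedBall_zero_iff.2 (h1.trans h2.le), rfl⟩
  obtain ⟨w, hw, hwv⟩ := (isClosed_toWeakSpace_closedBall _).mem_of_tendsto hu hball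
  rw [← (toWeakSpace ℝ E).injective hwv]
  exact mem_closedBall_zero_iff.1 hw

lemma norm_sub_le_of_mem_closure_of_continuous_toWeakSpace {X : Type*} [TopologicalSpace X]
    {f g : X → E} (hf : Continuous fun a => toWeakSpace ℝ E (f a))
    (hg : Continuous fun a => toWeakSpace ℝ E (g a)) {I : Set X} {c : ℝ}
    (hI : ∀ a ∈ I, ‖f a - g a‖ ≤ c) {a : X} (ha : a ∈ closure I) : ‖f a - g a‖ ≤ c :=
  have := mem_closure_iff_nhdsWithin_neBot.1 ha
  norm_le_of_tendsto_toWeakSpace (l := 𝓝[I] a)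
    (by simpa using ((hf.tendsto a).sub (hg.tendsto a)).mono_left nhdsWithin_le_nhds)
    tendsto_const_nhds (eventually_nhdsWithin_of_forall hI)

lemma norm_sub_le_of_mem_closure_of_continuousOn_toWeakSpace {f : E → E} {K D : Set E}
    (hf : ContinuousOn (fun z => toWeakSpace ℝ E (f z)) K) (hDK : D ⊆ K) {x : E}
    (hD : ∀ z ∈ D, ‖f x - f z‖ ≤ ‖x - z‖) {y : E} (hy : y ∈ K) (hyD : y ∈ closure D) :
    ‖f x - f y‖ ≤ ‖x - y‖ :=
  have := mem_closure_iff_nhdsWithin_neBot.1 hyD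
  norm_le_of_tendsto_toWeakSpace (l := 𝓝[D] y)
    (by simpa using (tendsto_const_nhds.sub (hf y hy).tendsto).mono_left (nhdsWithin_mono y hDK))
    ((continuous_const.sub continuous_id).norm.continuousWithinAt.tendsto)
    (eventually_nhdsWithin_of_forall hD)

end WeakTopology

theorem asymp_implies_pointwiseEventually_of_countablyCompact_general
    {S E : Type*} [Semigroup S] [TopologicalSpace S]
    [NormedAddCommGroup E] [NormedSpace ℝ E]
    -- `S` is a semitopological semigroup: multiplication is separately continuous
    (hmulL : ∀ t : S, Continuous fun s => t * s)
    -- `S` is countably compact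
    (hcc : ∀ F : ℕ → Set S, (∀ n, IsClosed (F n)) →
      (∀ t : Finset ℕ, (⋂ n ∈ t, F n).Nonempty) → (⋂ n, F n).Nonempty)
    (hrev : RightReversible S)
    (K : Set E) (hKsep : TopologicalSpace.IsSeparable K)
    (act : S → E → E)
    -- the action is separately weakly continuous
    (hcontS : ∀ x ∈ K, Continuous fun s : S => toWeakSpace ℝ E (act s x))
    (hcontK : ∀ s : S, ContinuousOn
      (fun x : WeakSpace ℝ E => toWeakSpace ℝ E (act s ((toWeakSpace ℝ E).symm x)))
      (toWeakSpace ℝ E '' K))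
    (han : AsympNonexpansive act K) :
    PointwiseEventuallyNonexpansive act K := by
  intro x hx
  obtain ⟨D, hDK, hDc, hKD⟩ := hKsep.exists_countable_dense_subset
  obtain ⟨y, rfl⟩ := hDc.exists_eq_range (closure_nonempty_iff.1 ⟨x, hKD hx⟩)
  have hyK n : y n ∈ K := hDK (mem_range_self n)
  choose I hI hIle using fun n => han x hx (y n) (hyK n)
  refine ⟨⋂ n, closure (I n), hrev.isLeftIdeal_iInter_of_countablyCompact hcc
    (fun n => (hI n).closure hmulL) (fun _ => isClosed_closure), fun s hs z hz => ?_⟩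
  have hactK : ContinuousOn (fun z => toWeakSpace ℝ E (act s z)) K :=
    (hcontK s).comp (toWeakSpaceCLM ℝ E).continuous.continuousOn (mapsTo_image _ _)
  refine norm_sub_le_of_mem_closure_of_continuousOn_toWeakSpace hactK hDK ?_ hz (hKD hz)
  rintro _ ⟨n, rfl⟩
  exact norm_sub_le_of_mem_closure_of_continuous_toWeakSpace (hcontS x hx) (hcontS _ (hyK n))
    (hIle n) (mem_iInter.1 hs n)

/-- if a countably compact, right reversible semitopological semigroup `S`
acts separately weakly continuously on a norm-separable subset `K` of a Banach space and
the action is asymptotically nonexpansive, then it is pointwise eventually nonexpansive. -/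
theorem asymp_implies_pointwiseEventually_of_countablyCompact
    {S E : Type*} [Semigroup S] [TopologicalSpace S] [T2Space S]
    [NormedAddCommGroup E] [NormedSpace ℝ E] [CompleteSpace E]
    -- `S` is a semitopological semigroup: multiplication is separately continuous
    (hmulL : ∀ t : S, Continuous fun s => t * s)
    (hmulR : ∀ t : S, Continuous fun s => s * t)
    -- `S` is countably compact
    (hcc : ∀ F : ℕ → Set S, (∀ n, IsClosed (F n)) →
      (∀ t : Finset ℕ, (⋂ n ∈ t, F n).Nonempty) → (⋂ n, F n).Nonempty)
    (hrev : RightReversible S)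
    (K : Set E) (hKsep : TopologicalSpace.IsSeparable K)
    (act : S → E → E) (hmaps : ∀ s : S, Set.MapsTo (act s) K K)
    (haction : ∀ s t : S, ∀ x ∈ K, act (s * t) x = act s (act t x))
    -- the action is separately weakly continuous
    (hcontS : ∀ x ∈ K, Continuous fun s : S => toWeakSpace ℝ E (act s x))
    (hcontK : ∀ s : S, ContinuousOn
      (fun x : WeakSpace ℝ E => toWeakSpace ℝ E (act s ((toWeakSpace ℝ E).symm x)))
      (toWeakSpace ℝ E '' K))
    (han : AsympNonexpansive act K) :
    PointwiseEventuallyNonexpansive act K :=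
  asymp_implies_pointwiseEventually_of_countablyCompact_general hmulL hcc hrev K hKsep act hcontS
    hcontK han
end
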